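/- arXiv:math/0304444 — 6 statements merged into one kernel-verified Lean document; each statement's English description precedes it below -/
import Mathlib

section
/- Let k be a field, Ω a commutative k-algebra, X a scheme over k, and S a scheme over Ω. Suppose given, for every commutative k-algebra R, a map φ_R from the set of k-morphisms Spec R → X to the set of Ω-morphisms Spec(R ⊗_k Ω) → S, and suppose this family is natural in R, i.e. for every k-algebra homomorphism g : R' → R and every k-morphism f : Spec R' → X one has φ_R(f ∘ Spec(g)) = φ_{R'}(f) ∘ Spec(g ⊗_k id_Ω). Then there exists a unique Ω-morphism φ_Ω : X ×_{Spec k} Spec Ω → S such that for every commutative k-algebra R and every k-morphism f : Spec R → X, the morphism φ_R(f) equals the composite of the base-change morphism Spec(R ⊗_k Ω) ≅ Spec R ×_{Spec k} Spec Ω → X ×_{Spec k} Spec Ω induced by f with φ_Ω. -/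
/-!
A morphism `Spec A ⟶ X ×_k Spec Ω` amounts to a point `x ∈ X(A)` together with an
`Ω`-algebra structure on `A`. If it factors as `Spec τ` followed by the base-change morphism of
`f : Spec R ⟶ X`, then `τ : R ⊗_k Ω → A` equals `μ ∘ (g ⊗ id)` for some `g : R → A` and the
multiplication `μ : A ⊗_k Ω → A`, so naturality gives `Spec τ ≫ φ_R(f) = Spec μ ≫ φ_A(x)`:
the composite depends only on the morphism to `X ×_k Spec Ω`. Covering test schemes by affines,
the same holds for any test scheme. The base-change morphisms of an affine open cover of `X`
form an open cover of `X ×_k Spec Ω`, so the `φ_{R_i}` glue to `φ_Ω`, and the same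
compatibility shows that `φ_Ω` factors every `φ_R(f)`.
-/

open AlgebraicGeometry CategoryTheory CategoryTheory.Limits TensorProduct

namespace ExtensionOfScalars

variable {k Ω : Type u} [CommRing k] [CommRing Ω] [Algebra k Ω] {X : Scheme.{u}}
  (fX : X ⟶ Spec (.of k))

lemma specMap_algHom_comp_comp {R A : Type u} [CommRing R] [Algebra k R] [CommRing A]
    [Algebra k A] (g : R →ₐ[k] A) {f : Spec (.of R) ⟶ X}
    (hf : f ≫ fX = Spec.map (CommRingCat.ofHom (algebraMap k R))) :
    (Spec.map (CommRingCat.ofHom (g : R →+* A)) ≫ f) ≫ fX =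
      Spec.map (CommRingCat.ofHom (algebraMap k A)) := by
  rw [Category.assoc, hf, ← Spec.map_comp, ← CommRingCat.ofHom_comp, g.comp_algebraMap]

lemma specMap_includeLeft_comp_comp (R : Type u) [CommRing R] [Algebra k R]
    {f : Spec (.of R) ⟶ X} (hf : f ≫ fX = Spec.map (CommRingCat.ofHom (algebraMap k R))) :
    (Spec.map (CommRingCat.ofHom
        (Algebra.TensorProduct.includeLeftRingHom : R →+* R ⊗[k] Ω)) ≫ f) ≫ fX =
      Spec.map (CommRingCat.ofHom
        ((Algebra.TensorProduct.includeRight : Ω →ₐ[k] R ⊗[k] Ω).toRingHom)) ≫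
        Spec.map (CommRingCat.ofHom (algebraMap k Ω)) := by
  rw [Category.assoc, hf, ← Spec.map_comp, ← Spec.map_comp, ← CommRingCat.ofHom_comp,
    ← CommRingCat.ofHom_comp, Algebra.TensorProduct.includeLeftRingHom_comp_algebraMap]

section BaseChange

variable (R : Type u) [CommRing R] [Algebra k R] (f : Spec (.of R) ⟶ X)
  (hf : f ≫ fX = Spec.map (CommRingCat.ofHom (algebraMap k R)))

variable (Ω) in
noncomputable def baseChangeHom :
    Spec (.of (R ⊗[k] Ω)) ⟶ pullback fX (Spec.map (CommRingCat.ofHom (algebraMap k Ω))) :=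
  pullback.lift _ _ (specMap_includeLeft_comp_comp fX R hf)

@[simp]
lemma baseChangeHom_fst : baseChangeHom Ω fX R f hf ≫ pullback.fst _ _ =
    Spec.map (CommRingCat.ofHom
      (Algebra.TensorProduct.includeLeftRingHom : R →+* R ⊗[k] Ω)) ≫ f :=
  pullback.lift_fst _ _ _

@[simp]
lemma baseChangeHom_snd : baseChangeHom Ω fX R f hf ≫ pullback.snd _ _ =
    Spec.map (CommRingCat.ofHom
      ((Algebra.TensorProduct.includeRight : Ω →ₐ[k] R ⊗[k] Ω).toRingHom)) :=
  pullback.lift_snd _ _ _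

noncomputable def baseChangeIso :
    Spec (.of (R ⊗[k] Ω)) ≅ pullback (f ≫ fX) (Spec.map (CommRingCat.ofHom (algebraMap k Ω))) :=
  (pullbackSpecIso k R Ω).symm ≪≫ pullback.congrHom hf.symm rfl

lemma baseChangeHom_eq_baseChangeIso_hom_comp :
    baseChangeHom Ω fX R f hf = (baseChangeIso fX R f hf).hom ≫
      pullback.map _ _ _ _ f (𝟙 _) (𝟙 _) (by simp) (by simp) := by
  apply pullback.hom_ext <;>
  · simp only [baseChangeIso, Iso.trans_hom, Iso.symm_hom, pullback.congrHom_hom,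
      Category.assoc, pullback.lift_fst, pullback.lift_snd, pullback.lift_fst_assoc,
      pullback.lift_snd_assoc]
    simp

end BaseChange

variable {S : Scheme.{u}}
  (φ : ∀ (R : Type u) [CommRing R] [Algebra k R] (f : Spec (.of R) ⟶ X),
    f ≫ fX = Spec.map (CommRingCat.ofHom (algebraMap k R)) → (Spec (.of (R ⊗[k] Ω)) ⟶ S))

def IsNatural : Prop :=
  ∀ (R' R : Type u) [CommRing R'] [Algebra k R'] [CommRing R] [Algebra k R]
    (g : R' →ₐ[k] R) (f : Spec (CommRingCat.of R') ⟶ X)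
    (hf : f ≫ fX = Spec.map (CommRingCat.ofHom (algebraMap k R')))
    (hgf : (Spec.map (CommRingCat.ofHom (g : R' →+* R)) ≫ f) ≫ fX =
      Spec.map (CommRingCat.ofHom (algebraMap k R))),
    φ R (Spec.map (CommRingCat.ofHom (g : R' →+* R)) ≫ f) hgf =
      Spec.map (CommRingCat.ofHom
        ((Algebra.TensorProduct.map g (AlgHom.id k Ω)).toRingHom)) ≫ φ R' f hf

variable {fX φ}

lemma exists_algHom_eq_productMap {A R : Type u} [CommRing A] [Algebra k A] [Algebra Ω A]
    [IsScalarTower k Ω A] [CommRing R] [Algebra k R] (τ : R ⊗[k] Ω →+* A)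
    (hτ : τ.comp (Algebra.TensorProduct.includeRight : Ω →ₐ[k] R ⊗[k] Ω).toRingHom =
      algebraMap Ω A) :
    ∃ g : R →ₐ[k] A, (g : R →+* A) = τ.comp Algebra.TensorProduct.includeLeftRingHom ∧
      τ = Algebra.TensorProduct.productMap g (IsScalarTower.toAlgHom k Ω A) := by
  refine ⟨{ τ.comp Algebra.TensorProduct.includeLeftRingHom with commutes' := fun c => ?_ },
    rfl, Algebra.TensorProduct.ringHom_ext ?_ ?_⟩
  · simp [IsScalarTower.algebraMap_apply k Ω A, ← hτ]
  · ext; simp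
  · refine hτ.trans (RingHom.ext fun ω => ?_)
    simp [← Algebra.TensorProduct.one_def]

lemma IsNatural.specMap_productMap_comp (hφ : IsNatural fX φ) {A : Type u} [CommRing A]
    [Algebra k A] [Algebra Ω A] [IsScalarTower k Ω A] {R : Type u} [CommRing R] [Algebra k R]
    {f : Spec (.of R) ⟶ X} (hf : f ≫ fX = Spec.map (CommRingCat.ofHom (algebraMap k R)))
    (g : R →ₐ[k] A) :
    Spec.map (CommRingCat.ofHom
        (Algebra.TensorProduct.productMap g (IsScalarTower.toAlgHom k Ω A) : R ⊗[k] Ω →+* A)) ≫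
        φ R f hf =
      Spec.map (CommRingCat.ofHom (Algebra.TensorProduct.productMap (AlgHom.id k A)
          (IsScalarTower.toAlgHom k Ω A) : A ⊗[k] Ω →+* A)) ≫
        φ A (Spec.map (CommRingCat.ofHom (g : R →+* A)) ≫ f) (specMap_algHom_comp_comp fX g hf) := by
  have hg : Algebra.TensorProduct.productMap g (IsScalarTower.toAlgHom k Ω A) =
      (Algebra.TensorProduct.productMap (AlgHom.id k A) (IsScalarTower.toAlgHom k Ω A)).comp
        (Algebra.TensorProduct.map g (AlgHom.id k Ω)) := by
    ext <;> simp
  rw [hφ R A g f hf, ← Category.assoc, ← Spec.map_comp, hg]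
  rfl

lemma IsNatural.specMap_comp_eq (hφ : IsNatural fX φ) {A R₁ R₂ : Type u} [CommRing A]
    [CommRing R₁] [Algebra k R₁] [CommRing R₂] [Algebra k R₂]
    {f₁ : Spec (.of R₁) ⟶ X} {f₂ : Spec (.of R₂) ⟶ X}
    (hf₁ : f₁ ≫ fX = Spec.map (CommRingCat.ofHom (algebraMap k R₁)))
    (hf₂ : f₂ ≫ fX = Spec.map (CommRingCat.ofHom (algebraMap k R₂)))
    (τ₁ : R₁ ⊗[k] Ω →+* A) (τ₂ : R₂ ⊗[k] Ω →+* A)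
    (h : Spec.map (CommRingCat.ofHom τ₁) ≫ baseChangeHom Ω fX R₁ f₁ hf₁ =
      Spec.map (CommRingCat.ofHom τ₂) ≫ baseChangeHom Ω fX R₂ f₂ hf₂) :
    Spec.map (CommRingCat.ofHom τ₁) ≫ φ R₁ f₁ hf₁ =
      Spec.map (CommRingCat.ofHom τ₂) ≫ φ R₂ f₂ hf₂ := by
  have hΩ : τ₂.comp (Algebra.TensorProduct.includeRight : Ω →ₐ[k] R₂ ⊗[k] Ω).toRingHom =
      τ₁.comp (Algebra.TensorProduct.includeRight : Ω →ₐ[k] R₁ ⊗[k] Ω).toRingHom := by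
    have := congr($h.symm ≫ pullback.snd _ _)
    simp only [Category.assoc, baseChangeHom_snd, ← Spec.map_comp,
      ← CommRingCat.ofHom_comp] at this
    exact congrArg CommRingCat.Hom.hom (Spec.map_injective this)
  have hX := congr($h ≫ pullback.fst _ _)
  simp only [Category.assoc, baseChangeHom_fst] at hX
  let : Algebra Ω A := (τ₁.comp Algebra.TensorProduct.includeRight.toRingHom).toAlgebra
  let : Algebra k A := ((algebraMap Ω A).comp (algebraMap k Ω)).toAlgebra
  have : IsScalarTower k Ω A := .of_algebraMap_eq' rfl
  obtain ⟨g₁, hg₁, hτ₁⟩ := exists_algHom_eq_productMap τ₁ rfl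
  obtain ⟨g₂, hg₂, hτ₂⟩ := exists_algHom_eq_productMap τ₂ hΩ
  rw [hτ₁, hτ₂, hφ.specMap_productMap_comp hf₁ g₁, hφ.specMap_productMap_comp hf₂ g₂]
  congr 2
  rw [hg₁, hg₂, CommRingCat.ofHom_comp, CommRingCat.ofHom_comp, Spec.map_comp, Spec.map_comp]
  simpa only [Category.assoc] using hX

lemma IsNatural.comp_eq_of_comp_baseChangeHom_eq (hφ : IsNatural fX φ) {T : Scheme.{u}}
    {R₁ R₂ : Type u} [CommRing R₁] [Algebra k R₁] [CommRing R₂] [Algebra k R₂]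
    {f₁ : Spec (.of R₁) ⟶ X} {f₂ : Spec (.of R₂) ⟶ X}
    (hf₁ : f₁ ≫ fX = Spec.map (CommRingCat.ofHom (algebraMap k R₁)))
    (hf₂ : f₂ ≫ fX = Spec.map (CommRingCat.ofHom (algebraMap k R₂)))
    (t₁ : T ⟶ Spec (.of (R₁ ⊗[k] Ω))) (t₂ : T ⟶ Spec (.of (R₂ ⊗[k] Ω)))
    (h : t₁ ≫ baseChangeHom Ω fX R₁ f₁ hf₁ = t₂ ≫ baseChangeHom Ω fX R₂ f₂ hf₂) :
    t₁ ≫ φ R₁ f₁ hf₁ = t₂ ≫ φ R₂ f₂ hf₂ := by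
  let 𝒰 := T.affineOpenCover.openCover
  refine 𝒰.hom_ext _ _ fun j => ?_
  obtain ⟨τ₁, hτ₁⟩ : ∃ τ, Spec.map (CommRingCat.ofHom τ) = 𝒰.f j ≫ t₁ :=
    ⟨(Spec.preimage (𝒰.f j ≫ t₁)).hom, Spec.map_preimage _⟩
  obtain ⟨τ₂, hτ₂⟩ : ∃ τ, Spec.map (CommRingCat.ofHom τ) = 𝒰.f j ≫ t₂ :=
    ⟨(Spec.preimage (𝒰.f j ≫ t₂)).hom, Spec.map_preimage _⟩
  rw [← Category.assoc, ← Category.assoc, ← hτ₁, ← hτ₂]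
  refine hφ.specMap_comp_eq hf₁ hf₂ τ₁ τ₂ ?_
  rw [hτ₁, hτ₂]
  exact (Category.assoc _ _ _).trans ((𝒰.f j ≫= h).trans (Category.assoc _ _ _).symm)

section Cover

variable (𝒜 : X.AffineOpenCover) [∀ i, Algebra k (𝒜.X i)]
  (h𝒜 : ∀ i, 𝒜.f i ≫ fX = Spec.map (CommRingCat.ofHom (algebraMap k (𝒜.X i))))

variable (Ω fX) in
noncomputable def baseChangeCover :
    (pullback fX (Spec.map (CommRingCat.ofHom (algebraMap k Ω)))).OpenCover :=
  (Scheme.Pullback.openCoverOfLeft 𝒜.openCover fX _).copy 𝒜.I₀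
    (fun i => Spec (.of (𝒜.X i ⊗[k] Ω))) (fun i => baseChangeHom Ω fX (𝒜.X i) (𝒜.f i) (h𝒜 i))
    (Equiv.refl _) (fun i => baseChangeIso fX (𝒜.X i) (𝒜.f i) (h𝒜 i))
    (fun i => baseChangeHom_eq_baseChangeIso_hom_comp fX (𝒜.X i) (𝒜.f i) (h𝒜 i))

variable (φ) in
noncomputable def glueHom (hφ : IsNatural fX φ) :
    pullback fX (Spec.map (CommRingCat.ofHom (algebraMap k Ω))) ⟶ S :=
  (baseChangeCover Ω fX 𝒜 h𝒜).glueMorphisms (fun (i : 𝒜.I₀) => φ (𝒜.X i) (𝒜.f i) (h𝒜 i))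
    fun (_ _ : 𝒜.I₀) => hφ.comp_eq_of_comp_baseChangeHom_eq _ _ _ _ pullback.condition

lemma baseChangeCover_f_comp_glueHom (hφ : IsNatural fX φ) (i : 𝒜.I₀) :
    (baseChangeCover Ω fX 𝒜 h𝒜).f i ≫ glueHom φ 𝒜 h𝒜 hφ = φ (𝒜.X i) (𝒜.f i) (h𝒜 i) :=
  Scheme.Cover.ι_glueMorphisms (baseChangeCover Ω fX 𝒜 h𝒜)
    (fun (i : 𝒜.I₀) => φ (𝒜.X i) (𝒜.f i) (h𝒜 i)) _ i

lemma baseChangeHom_comp_glueHom (hφ : IsNatural fX φ) (R : Type u) [CommRing R] [Algebra k R]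
    (f : Spec (.of R) ⟶ X) (hf : f ≫ fX = Spec.map (CommRingCat.ofHom (algebraMap k R))) :
    baseChangeHom Ω fX R f hf ≫ glueHom φ 𝒜 h𝒜 hφ = φ R f hf := by
  set L := baseChangeHom Ω fX R f hf
  refine Scheme.Cover.hom_ext ((baseChangeCover Ω fX 𝒜 h𝒜).pullback₁ L) _ _
    fun (i : 𝒜.I₀) => ?_
  change pullback.fst L _ ≫ L ≫ _ = pullback.fst L _ ≫ _
  rw [pullback.condition_assoc, baseChangeCover_f_comp_glueHom]
  exact (hφ.comp_eq_of_comp_baseChangeHom_eq hf (h𝒜 i) _ _ pullback.condition).symm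

lemma glueHom_comp {fS : S ⟶ Spec (.of Ω)} (hφ : IsNatural fX φ)
    (hover : ∀ (R : Type u) [CommRing R] [Algebra k R] (f : Spec (.of R) ⟶ X)
      (hf : f ≫ fX = Spec.map (CommRingCat.ofHom (algebraMap k R))),
      φ R f hf ≫ fS = Spec.map (CommRingCat.ofHom
        ((Algebra.TensorProduct.includeRight : Ω →ₐ[k] R ⊗[k] Ω).toRingHom))) :
    glueHom φ 𝒜 h𝒜 hφ ≫ fS = pullback.snd _ _ := by
  refine (baseChangeCover Ω fX 𝒜 h𝒜).hom_ext _ _ fun (i : 𝒜.I₀) => ?_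
  rw [← Category.assoc, baseChangeCover_f_comp_glueHom]
  exact (hover _ _ _).trans (baseChangeHom_snd fX _ _ (h𝒜 i)).symm

end Cover

end ExtensionOfScalars

open AlgebraicGeometry CategoryTheory CategoryTheory.Limits TensorProduct in
/-- Universal property of extension of scalars for schemes. Given a natural
family `φ` sending `k`-morphisms `Spec R ⟶ X` to `Ω`-morphisms `Spec (R ⊗[k] Ω) ⟶ S`,
there is a unique `Ω`-morphism `φ_Ω : X ×_{Spec k} Spec Ω ⟶ S` through which every
`φ_R(f)` factors via the base-change morphism
`Spec (R ⊗[k] Ω) ⟶ X ×_{Spec k} Spec Ω` induced by `f`. -/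
theorem stmt_1 (k : Type u) [Field k] (Ω : Type u) [CommRing Ω] [Algebra k Ω]
    (X S : Scheme.{u}) (fX : X ⟶ Spec (CommRingCat.of k))
    (fS : S ⟶ Spec (CommRingCat.of Ω))
    (φ : ∀ (R : Type u) [CommRing R] [Algebra k R]
      (f : Spec (CommRingCat.of R) ⟶ X),
      f ≫ fX = Spec.map (CommRingCat.ofHom (algebraMap k R)) →
      (Spec (CommRingCat.of (R ⊗[k] Ω)) ⟶ S))
    (hover : ∀ (R : Type u) [CommRing R] [Algebra k R]
      (f : Spec (CommRingCat.of R) ⟶ X)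
      (hf : f ≫ fX = Spec.map (CommRingCat.ofHom (algebraMap k R))),
      φ R f hf ≫ fS = Spec.map (CommRingCat.ofHom
        ((Algebra.TensorProduct.includeRight : Ω →ₐ[k] R ⊗[k] Ω).toRingHom)))
    (hnat : ∀ (R' R : Type u) [CommRing R'] [Algebra k R'] [CommRing R] [Algebra k R]
      (g : R' →ₐ[k] R) (f : Spec (CommRingCat.of R') ⟶ X)
      (hf : f ≫ fX = Spec.map (CommRingCat.ofHom (algebraMap k R')))
      (hgf : (Spec.map (CommRingCat.ofHom (g : R' →+* R)) ≫ f) ≫ fX =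
        Spec.map (CommRingCat.ofHom (algebraMap k R))),
      φ R (Spec.map (CommRingCat.ofHom (g : R' →+* R)) ≫ f) hgf =
        Spec.map (CommRingCat.ofHom
          ((Algebra.TensorProduct.map g (AlgHom.id k Ω)).toRingHom)) ≫ φ R' f hf) :
    ∃! φΩ : pullback fX (Spec.map (CommRingCat.ofHom (algebraMap k Ω))) ⟶ S,
      φΩ ≫ fS = pullback.snd fX (Spec.map (CommRingCat.ofHom (algebraMap k Ω))) ∧
      ∀ (R : Type u) [CommRing R] [Algebra k R]
        (f : Spec (CommRingCat.of R) ⟶ X)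
        (hf : f ≫ fX = Spec.map (CommRingCat.ofHom (algebraMap k R)))
        (hcomm : (Spec.map (CommRingCat.ofHom
            (Algebra.TensorProduct.includeLeftRingHom : R →+* R ⊗[k] Ω)) ≫ f) ≫ fX =
          Spec.map (CommRingCat.ofHom
            ((Algebra.TensorProduct.includeRight : Ω →ₐ[k] R ⊗[k] Ω).toRingHom)) ≫
            Spec.map (CommRingCat.ofHom (algebraMap k Ω))),
        φ R f hf =
          pullback.lift
            (Spec.map (CommRingCat.ofHom
              (Algebra.TensorProduct.includeLeftRingHom : R →+* R ⊗[k] Ω)) ≫ f)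
            (Spec.map (CommRingCat.ofHom
              ((Algebra.TensorProduct.includeRight : Ω →ₐ[k] R ⊗[k] Ω).toRingHom)))
            hcomm ≫ φΩ := by
  open ExtensionOfScalars in
  obtain ⟨𝒜⟩ : Nonempty X.AffineOpenCover := ⟨X.affineOpenCover⟩
  let _ (i : 𝒜.I₀) : Algebra k (𝒜.X i) := (Spec.preimage (𝒜.f i ≫ fX)).hom.toAlgebra
  have h𝒜 (i : 𝒜.I₀) : 𝒜.f i ≫ fX = Spec.map (CommRingCat.ofHom (algebraMap k (𝒜.X i))) :=
    (Spec.map_preimage _).symm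
  have hφ : IsNatural fX φ := hnat
  refine ⟨glueHom φ 𝒜 h𝒜 hφ, ⟨glueHom_comp 𝒜 h𝒜 hφ hover, fun R _ _ f hf _ =>
    (baseChangeHom_comp_glueHom 𝒜 h𝒜 hφ R f hf).symm⟩, ?_⟩
  rintro ψ ⟨-, hψ⟩
  refine (baseChangeCover Ω fX 𝒜 h𝒜).hom_ext _ _ fun (i : 𝒜.I₀) => ?_
  rw [baseChangeCover_f_comp_glueHom]
  exact (hψ (𝒜.X i) (𝒜.f i) (h𝒜 i) _).symm
end

section
/- Let d ≥ 0 be an integer and a_0, …, a_d integers, and set N(x) = Σ_{i=0}^d a_i x^i. Then for all real numbers q > 1 and s > d, the series Σ_{r ≥ 1} N(q^r) q^{−rs}/r converges absolutely, and exp( Σ_{r ≥ 1} N(q^r) q^{−rs}/r ) = Π_{i=0}^d (1 − q^{i−s})^{−a_i}, where each factor is the real number 1 − q^{i−s} raised to the integer power −a_i. -/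
/-- For `N(x) = Σ_{i=0}^d a_i x^i`, `q > 1`, `s > d`, the series
`Σ_{r ≥ 1} N(q^r) q^{-rs}/r` converges absolutely and its exponential equals
`Π_{i=0}^d (1 - q^{i-s})^{-a_i}`. -/
theorem stmt_3 (d : ℕ) (a : ℕ → ℤ) (q s : ℝ) (hq : 1 < q) (hs : (d : ℝ) < s) :
    Summable (fun r : ℕ =>
      |(∑ i ∈ Finset.range (d + 1), (a i : ℝ) * (q ^ (r + 1)) ^ i) *
        Real.rpow q (-(((r : ℝ) + 1) * s)) / ((r : ℝ) + 1)|) ∧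
    Real.exp (∑' r : ℕ,
      (∑ i ∈ Finset.range (d + 1), (a i : ℝ) * (q ^ (r + 1)) ^ i) *
        Real.rpow q (-(((r : ℝ) + 1) * s)) / ((r : ℝ) + 1)) =
      ∏ i ∈ Finset.range (d + 1), (1 - Real.rpow q ((i : ℝ) - s)) ^ (-(a i)) := by
  simp only [Real.rpow_eq_pow]
  have hq0 : (0 : ℝ) < q := lt_trans one_pos hq
  set x : ℕ → ℝ := fun i => q ^ ((i : ℝ) - s) with hxdef
  have hxpos : ∀ i, 0 < x i := fun i => Real.rpow_pos_of_pos hq0 _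
  have hxlt : ∀ i ∈ Finset.range (d + 1), x i < 1 := by
    intro i hi
    apply Real.rpow_lt_one_of_one_lt_of_neg hq
    have hid : (i : ℝ) ≤ (d : ℝ) := by
      exact_mod_cast Nat.lt_succ_iff.mp (Finset.mem_range.mp hi)
    linarith
  have hterm : ∀ r : ℕ,
      (∑ i ∈ Finset.range (d + 1), (a i : ℝ) * (q ^ (r + 1)) ^ i) *
        q ^ (-(((r : ℝ) + 1) * s)) / ((r : ℝ) + 1)
      = ∑ i ∈ Finset.range (d + 1), (a i : ℝ) * ((x i) ^ (r + 1) / ((r : ℝ) + 1)) := by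
    intro r
    rw [Finset.sum_mul, Finset.sum_div]
    refine Finset.sum_congr rfl fun i hi => ?_
    have h1 : ((q ^ (r + 1) : ℝ)) ^ i = q ^ (((((r : ℝ) + 1)) * (i : ℝ)) : ℝ) := by
      rw [← pow_mul, ← Real.rpow_natCast q ((r + 1) * i)]
      congr 1
      push_cast
      ring
    have h2 : (x i) ^ (r + 1) = q ^ ((((i : ℝ) - s) * (((r : ℝ) + 1))) : ℝ) := by
      rw [hxdef, Real.rpow_mul hq0.le, ← Real.rpow_natCast (q ^ ((i : ℝ) - s)) (r + 1)]
      congr 1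
      push_cast
      ring
    have h3 : ((q ^ (r + 1) : ℝ)) ^ i * q ^ ((-(((r : ℝ) + 1) * s)) : ℝ)
        = (x i) ^ (r + 1) := by
      rw [h1, ← Real.rpow_add hq0, h2]
      congr 1
      ring
    rw [← h3]
    ring
  have hsum : ∀ i ∈ Finset.range (d + 1),
      HasSum (fun r : ℕ => (a i : ℝ) * ((x i) ^ (r + 1) / ((r : ℝ) + 1)))
        ((a i : ℝ) * (-Real.log (1 - x i))) := by
    intro i hi
    have habs : |x i| < 1 := by
      rw [abs_of_pos (hxpos i)]; exact hxlt i hi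
    have h := (Real.hasSum_pow_div_log_of_abs_lt_one habs).mul_left ((a i : ℝ))
    exact h
  have hF : HasSum (fun r : ℕ =>
      (∑ i ∈ Finset.range (d + 1), (a i : ℝ) * (q ^ (r + 1)) ^ i) *
        q ^ (-(((r : ℝ) + 1) * s)) / ((r : ℝ) + 1))
      (∑ i ∈ Finset.range (d + 1), (a i : ℝ) * (-Real.log (1 - x i))) := by
    have := hasSum_sum hsum
    refine HasSum.congr_fun this fun r => hterm r
  constructor
  · exact summable_abs_iff.mpr hF.summable
  · rw [hF.tsum_eq, Real.exp_sum]
    refine Finset.prod_congr rfl fun i hi => ?_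
    have hpos : 0 < 1 - x i := by linarith [hxlt i hi]
    rw [← Real.rpow_intCast (1 - x i) (-(a i)), Real.rpow_def_of_pos hpos]
    congr 1
    push_cast
    ring
end

section
/- Let d ≥ 0 be an integer, a_0, …, a_d integers, and χ = Σ_{i=0}^d a_i. Let s be a real number with s ≠ i for every integer i with 0 ≤ i ≤ d. Then, as q tends to 1 from the right, the quotient ( Π_{i=0}^d (1 − q^{i−s})^{a_i} ) / (q − 1)^χ tends to Π_{i=0}^d (s − i)^{a_i}, where all exponents are integer powers (zpow). In particular, the function q ↦ Π_{i=0}^d (1 − q^{i−s})^{a_i} has a zero of order exactly χ at q = 1, with leading coefficient Π_{i=0}^d (s − i)^{a_i}. -/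
/-!
Each factor vanishes to first order at `q = 1`: the derivative of `q ↦ 1 - q ^ (i - s)` there is
`s - i ≠ 0`, so `(1 - q ^ (i - s)) / (q - 1) → s - i`. Splitting `(q - 1) ^ χ` as
`∏ (q - 1) ^ aᵢ` turns the quotient into `∏ ((1 - q ^ (i - s)) / (q - 1)) ^ aᵢ`, and `zpow` is
continuous at the nonzero limits `s - i`.
-/

open Filter Topology

section CommGroupWithZero

variable {G ι : Type*} [CommGroupWithZero G]

lemma zpow_sum₀ {x : G} (hx : x ≠ 0) (a : ι → ℤ) (s : Finset ι) :
    x ^ (∑ i ∈ s, a i) = ∏ i ∈ s, x ^ a i := by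
  classical
  induction s using Finset.induction with
  | empty => simp
  | insert j s hj ih => rw [Finset.sum_insert hj, Finset.prod_insert hj, zpow_add₀ hx, ih]

lemma prod_zpow_div_zpow_sum {x : G} (hx : x ≠ 0) (f : ι → G) (a : ι → ℤ) (s : Finset ι) :
    (∏ i ∈ s, f i ^ a i) / x ^ (∑ i ∈ s, a i) = ∏ i ∈ s, (f i / x) ^ a i := by
  simp only [zpow_sum₀ hx, ← Finset.prod_div_distrib, div_zpow]

end CommGroupWithZero

lemma tendsto_one_sub_rpow_div_sub_one (c : ℝ) :
    Tendsto (fun q : ℝ => (1 - q ^ c) / (q - 1)) (𝓝[≠] 1) (𝓝 (-c)) := by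
  have hderiv : HasDerivAt (fun q : ℝ => q ^ c) c 1 := by
    simpa using Real.hasDerivAt_rpow_const (x := 1) (p := c) (Or.inl one_ne_zero)
  refine (hasDerivAt_iff_tendsto_slope.mp hderiv).neg.congr fun q => ?_
  rw [slope_def_field, Real.one_rpow, ← neg_div, neg_sub]

/-- With `χ = Σ_{i=0}^d a_i` and `s ≠ i` for `0 ≤ i ≤ d`, as `q → 1⁺`,
`(Π_{i=0}^d (1 - q^{i-s})^{a_i}) / (q-1)^χ` tends to `Π_{i=0}^d (s-i)^{a_i}`. -/
theorem stmt_4 (d : ℕ) (a : ℕ → ℤ) (s : ℝ) (hs : ∀ i : ℕ, i ≤ d → s ≠ (i : ℝ)) :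
    Filter.Tendsto (fun q : ℝ =>
      (∏ i ∈ Finset.range (d + 1), (1 - Real.rpow q ((i : ℝ) - s)) ^ (a i)) /
        (q - 1) ^ (∑ i ∈ Finset.range (d + 1), a i))
      (nhdsWithin 1 (Set.Ioi 1))
      (nhds (∏ i ∈ Finset.range (d + 1), (s - (i : ℝ)) ^ (a i))) := by
  have hfactor : ∀ i ∈ Finset.range (d + 1), Tendsto
      (fun q : ℝ => ((1 - q ^ ((i : ℝ) - s)) / (q - 1)) ^ a i) (𝓝[>] 1) (𝓝 ((s - i) ^ a i)) := by
    intro i hi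
    have hsi : s - i ≠ 0 := sub_ne_zero.mpr (hs i (Nat.lt_succ_iff.mp (Finset.mem_range.mp hi)))
    have hlim := (tendsto_one_sub_rpow_div_sub_one ((i : ℝ) - s)).mono_left
      (nhdsWithin_mono 1 fun q (hq : 1 < q) => hq.ne')
    rw [neg_sub] at hlim
    exact hlim.zpow₀ (a i) (Or.inl hsi)
  refine (tendsto_finsetProd _ hfactor).congr' ?_
  filter_upwards [self_mem_nhdsWithin] with q (hq : 1 < q)
  exact (prod_zpow_div_zpow_sum (sub_ne_zero.mpr hq.ne') _ a _).symm
end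

section
/- For every integer n ≥ 1, the units of finite multiplicative order of the ring R_n = ℤ[T]/(Tⁿ − 1) are exactly the classes ±T̄^i for 0 ≤ i < n, and these 2n elements are pairwise distinct; in particular the set of roots of unity of R_n has exactly 2n elements. -/
/-!
If `f ∈ ℤ[T]` of degree `< n` satisfies `fᵐ ≡ 1 mod Tⁿ - 1`, then `f(ζ)` is a root of unity, hence
of absolute value `1`, for every `n`-th root of unity `ζ ∈ ℂ`. The discrete Parseval identity
`∑_{j<n} |f(ζʲ)|² = n ∑_k a_k²` for a primitive `ζ` then gives `∑_k a_k² = 1`, so `f = ±Tⁱ`.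
The `2n` elements `±T̄ⁱ` are distinct because reduction mod `Tⁿ - 1` is injective on polynomials
of degree `< n`.
-/

open Polynomial Finset ComplexConjugate

theorem sum_range_pow_of_pow_eq_one {K : Type*} [Field K] [DecidableEq K] {ω : K} {n : ℕ}
    (hω : ω ^ n = 1) : ∑ j ∈ range n, ω ^ j = if ω = 1 then (n : K) else 0 := by
  split_ifs with h
  · simp [h]
  · rw [geom_sum_eq h, hω, sub_self, zero_div]

theorem IsPrimitiveRoot.sum_pow_mul_conj_pow {ζ : ℂ} {n : ℕ} (hζ : IsPrimitiveRoot ζ n)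
    {k l : ℕ} (hk : k < n) (hl : l < n) :
    ∑ j ∈ range n, ζ ^ (j * k) * conj (ζ ^ (j * l)) = if k = l then (n : ℂ) else 0 := by
  have hn : n ≠ 0 := by omega
  have hconj : conj ζ = ζ⁻¹ :=
    (Complex.inv_eq_conj (Complex.norm_eq_one_of_pow_eq_one hζ.pow_eq_one hn)).symm
  have hω : (ζ ^ k * (ζ ^ l)⁻¹) ^ n = 1 := by
    rw [mul_pow, inv_pow, ← pow_mul, ← pow_mul, mul_comm k, mul_comm l, pow_mul, pow_mul,
      hζ.pow_eq_one, one_pow, one_pow, inv_one, one_mul]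
  have hω1 : ζ ^ k * (ζ ^ l)⁻¹ = 1 ↔ k = l := by
    rw [mul_inv_eq_one₀ (pow_ne_zero _ (hζ.ne_zero hn))]
    exact ⟨hζ.pow_inj hk hl, congrArg _⟩
  calc ∑ j ∈ range n, ζ ^ (j * k) * conj (ζ ^ (j * l))
      = ∑ j ∈ range n, (ζ ^ k * (ζ ^ l)⁻¹) ^ j := by
        refine sum_congr rfl fun j _ => ?_
        rw [map_pow, hconj]
        ring
    _ = if k = l then (n : ℂ) else 0 := by
        rw [sum_range_pow_of_pow_eq_one hω]
        exact if_congr hω1 rfl rfl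

theorem Polynomial.sum_normSq_eval_primitiveRoot {ζ : ℂ} {n : ℕ} (hζ : IsPrimitiveRoot ζ n)
    {f : ℂ[X]} (hf : f.natDegree < n) :
    ∑ j ∈ range n, Complex.normSq (f.eval (ζ ^ j)) =
      n * ∑ k ∈ range n, Complex.normSq (f.coeff k) := by
  have hterm : ∀ j, f.eval (ζ ^ j) * conj (f.eval (ζ ^ j)) = ∑ k ∈ range n, ∑ l ∈ range n,
      f.coeff k * conj (f.coeff l) * (ζ ^ (j * k) * conj (ζ ^ (j * l))) := by
    intro j
    rw [eval_eq_sum_range' hf, map_sum, sum_mul_sum]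
    refine sum_congr rfl fun k _ => sum_congr rfl fun l _ => ?_
    simp only [map_mul, map_pow]
    ring
  apply Complex.ofReal_injective
  push_cast
  simp only [← Complex.mul_conj]
  calc ∑ j ∈ range n, f.eval (ζ ^ j) * conj (f.eval (ζ ^ j))
      = ∑ k ∈ range n, ∑ l ∈ range n, f.coeff k * conj (f.coeff l) *
          ∑ j ∈ range n, ζ ^ (j * k) * conj (ζ ^ (j * l)) := by
        simp only [hterm, mul_sum]
        rw [sum_comm]
        exact sum_congr rfl fun k _ => sum_comm
    _ = n * ∑ k ∈ range n, f.coeff k * conj (f.coeff k) := by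
        rw [mul_sum]
        refine sum_congr rfl fun k hk => ?_
        rw [sum_congr rfl fun l hl => by
          rw [hζ.sum_pow_mul_conj_pow (mem_range.mp hk) (mem_range.mp hl), mul_ite, mul_zero]]
        rw [sum_ite_eq, if_pos hk, mul_comm]

theorem Finset.exists_sq_eq_one_of_sum_sq_eq_one {ι : Type*} [DecidableEq ι] {s : Finset ι}
    {a : ι → ℤ} (h : ∑ i ∈ s, a i ^ 2 = 1) :
    ∃ i ∈ s, a i ^ 2 = 1 ∧ ∀ j ∈ s, j ≠ i → a j = 0 := by
  obtain ⟨i, hi, hai⟩ : ∃ i ∈ s, a i ≠ 0 := by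
    by_contra! h0
    rw [sum_eq_zero fun i hi => by rw [h0 i hi, sq, zero_mul]] at h
    exact zero_ne_one h
  rw [← add_sum_erase s _ hi] at h
  have hpos : 0 < a i ^ 2 := by positivity
  have hrest : 0 ≤ ∑ j ∈ s.erase i, a j ^ 2 := sum_nonneg fun j _ => sq_nonneg _
  refine ⟨i, hi, by omega, fun j hj hji => pow_eq_zero_iff two_ne_zero |>.mp ?_⟩
  exact (sum_eq_zero_iff_of_nonneg fun k _ => sq_nonneg (a k)).mp (by omega) j
    (mem_erase.mpr ⟨hji, hj⟩)

theorem sign_mul_pow_pow_two_mul_eq_one {A : Type*} [CommRing A] {t : A} {n : ℕ}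
    (ht : t ^ n = 1) (b : Bool) (i : ℕ) : ((if b then 1 else -1) * t ^ i) ^ (2 * n) = 1 := by
  have hsign : (if b then 1 else -1 : A) ^ 2 = 1 := by split_ifs <;> simp
  calc ((if b then 1 else -1) * t ^ i) ^ (2 * n)
      = ((if b then 1 else -1) ^ 2) ^ n * (t ^ n) ^ (2 * i) := by ring
    _ = 1 := by rw [hsign, ht, one_pow, one_pow, one_mul]

namespace Polynomial

theorem eq_X_pow_or_neg_of_sum_sq_coeff_eq_one {n : ℕ} {f : ℤ[X]} (hf : f.natDegree < n)
    (h : ∑ k ∈ range n, f.coeff k ^ 2 = 1) : ∃ i < n, f = X ^ i ∨ f = -X ^ i := by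
  obtain ⟨i, hi, hsq, hzero⟩ := exists_sq_eq_one_of_sum_sq_eq_one h
  have hmono : f = C (f.coeff i) * X ^ i := by
    ext k
    rw [coeff_C_mul_X_pow]
    split_ifs with hki
    · rw [hki]
    · by_cases hk : k < n
      · exact hzero k (mem_range.mpr hk) hki
      · exact coeff_eq_zero_of_natDegree_lt (by omega)
  refine ⟨i, mem_range.mp hi, ?_⟩
  rcases sq_eq_one_iff.mp hsq with h1 | h1
  · left; rw [hmono, h1, C_1, one_mul]
  · right; rw [hmono, h1, C_neg, C_1, neg_one_mul]

theorem eval₂_pow_eq_one_of_dvd {R S : Type*} [CommRing R] [CommRing S] (φ : R →+* S)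
    {n m : ℕ} {f : R[X]} (hdvd : X ^ n - 1 ∣ f ^ m - 1) {z : S} (hz : z ^ n = 1) :
    f.eval₂ φ z ^ m = 1 := by
  obtain ⟨q, hq⟩ := hdvd
  have h := congrArg (eval₂ φ z) hq
  rwa [eval₂_sub, eval₂_pow, eval₂_one, eval₂_mul, eval₂_sub, eval₂_pow, eval₂_X, eval₂_one, hz,
    sub_self, zero_mul, sub_eq_zero] at h

theorem eq_X_pow_or_neg_of_dvd_pow_sub_one {n m : ℕ} (hn : n ≠ 0) (hm : m ≠ 0)
    {f : ℤ[X]} (hf : f.natDegree < n) (hdvd : X ^ n - 1 ∣ f ^ m - 1) :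
    ∃ i < n, f = X ^ i ∨ f = -X ^ i := by
  obtain ⟨ζ, hζ⟩ : ∃ ζ : ℂ, IsPrimitiveRoot ζ n := ⟨_, Complex.isPrimitiveRoot_exp n hn⟩
  set g := f.map (Int.castRingHom ℂ)
  have hunit : ∀ j, Complex.normSq (g.eval (ζ ^ j)) = 1 := by
    intro j
    have hroot : (ζ ^ j) ^ n = 1 := by rw [← pow_mul, mul_comm, pow_mul, hζ.pow_eq_one, one_pow]
    rw [eval_map, Complex.normSq_eq_norm_sq,
      Complex.norm_eq_one_of_pow_eq_one (eval₂_pow_eq_one_of_dvd _ hdvd hroot) hm, one_pow]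
  have hg : g.natDegree < n := natDegree_map_le.trans_lt hf
  have hsum : (n : ℝ) * ∑ k ∈ range n, (f.coeff k : ℝ) ^ 2 = n * 1 := by
    simpa [hunit, g, sq] using (sum_normSq_eval_primitiveRoot hζ hg).symm
  refine eq_X_pow_or_neg_of_sum_sq_coeff_eq_one hf ?_
  exact_mod_cast mul_left_cancel₀ (Nat.cast_ne_zero.mpr hn) hsum

section Quotient

variable {R : Type*} [CommRing R] {n : ℕ}

theorem mk_X_pow_eq_one : Ideal.Quotient.mk (Ideal.span {(X : R[X]) ^ n - 1}) X ^ n = 1 := by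
  rw [← map_pow, ← map_one (Ideal.Quotient.mk _), Ideal.Quotient.eq]
  exact Ideal.mem_span_singleton_self _

theorem monic_X_pow_sub_one (hn : n ≠ 0) : ((X : R[X]) ^ n - 1).Monic := by
  simpa using monic_X_pow_sub_C (1 : R) hn

variable [Nontrivial R]

theorem natDegree_X_pow_sub_one : ((X : R[X]) ^ n - 1).natDegree = n := by
  simpa using natDegree_X_pow_sub_C (n := n) (r := (1 : R))

theorem exists_natDegree_lt_mk_eq (hn : n ≠ 0) (x : R[X] ⧸ Ideal.span {(X : R[X]) ^ n - 1}) :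
    ∃ f : R[X], f.natDegree < n ∧ Ideal.Quotient.mk _ f = x := by
  obtain ⟨g, rfl⟩ := Ideal.Quotient.mk_surjective x
  have hne : (X : R[X]) ^ n - 1 ≠ 1 := fun h => hn <| by
    rw [← natDegree_X_pow_sub_one (R := R) (n := n), h, natDegree_one]
  refine ⟨g %ₘ (X ^ n - 1), ?_, ?_⟩
  · simpa only [natDegree_X_pow_sub_one] using
      natDegree_modByMonic_lt g (monic_X_pow_sub_one hn) hne
  · rw [Ideal.Quotient.eq, Ideal.mem_span_singleton, modByMonic_eq_sub_mul_div, sub_sub_cancel_left]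
    exact (dvd_mul_right _ _).neg_right

theorem eq_of_mk_eq_mk_of_natDegree_lt {f g : R[X]} (hf : f.natDegree < n) (hg : g.natDegree < n)
    (h : Ideal.Quotient.mk (Ideal.span {(X : R[X]) ^ n - 1}) f = Ideal.Quotient.mk _ g) :
    f = g := by
  have hmonic := monic_X_pow_sub_one (R := R) (n := n) (by omega)
  have hmod : ∀ p : R[X], p.natDegree < n → p %ₘ (X ^ n - 1) = p := fun p hp =>
    (modByMonic_eq_self_iff hmonic).mpr (degree_lt_degree (natDegree_X_pow_sub_one (R := R) ▸ hp))
  rw [← hmod f hf, ← hmod g hg]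
  exact modByMonic_eq_of_dvd_sub hmonic (Ideal.mem_span_singleton.mp (Ideal.Quotient.eq.mp h))

end Quotient

theorem eq_mk_X_pow_or_neg_of_pow_eq_one {n m : ℕ} (hn : n ≠ 0) (hm : m ≠ 0)
    {x : ℤ[X] ⧸ Ideal.span {(X : ℤ[X]) ^ n - 1}} (hx : x ^ m = 1) :
    ∃ i < n, x = Ideal.Quotient.mk _ X ^ i ∨ x = -Ideal.Quotient.mk _ X ^ i := by
  obtain ⟨f, hf, rfl⟩ := exists_natDegree_lt_mk_eq hn x
  have hdvd : X ^ n - 1 ∣ f ^ m - 1 := by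
    rw [← Ideal.mem_span_singleton, ← Ideal.Quotient.eq, map_pow, map_one, hx]
  obtain ⟨i, hi, rfl | rfl⟩ := eq_X_pow_or_neg_of_dvd_pow_sub_one hn hm hf hdvd
  exacts [⟨i, hi, .inl (map_pow _ _ _)⟩, ⟨i, hi, .inr (by rw [map_neg, map_pow])⟩]

theorem injective_sign_mul_mk_X_pow (n : ℕ) :
    Function.Injective fun p : Bool × Fin n => (if p.1 then 1 else -1) *
      Ideal.Quotient.mk (Ideal.span {(X : ℤ[X]) ^ n - 1}) X ^ (p.2 : ℕ) := by
  have hmk : ∀ p : Bool × Fin n, (if p.1 then 1 else -1) *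
      Ideal.Quotient.mk (Ideal.span {(X : ℤ[X]) ^ n - 1}) X ^ (p.2 : ℕ) =
      Ideal.Quotient.mk _ (monomial p.2 (if p.1 then 1 else -1 : ℤ)) := by
    rintro ⟨_ | _, i⟩ <;>
      simp only [Bool.false_eq_true, ↓reduceIte, ← C_mul_X_pow_eq_monomial, eq_intCast,
        Int.cast_one, one_mul, map_neg, map_pow]
    ring
  rintro ⟨b, i⟩ ⟨c, j⟩ h
  have hmono := eq_of_mk_eq_mk_of_natDegree_lt ((natDegree_monomial_le _).trans_lt i.2)
    ((natDegree_monomial_le _).trans_lt j.2) ((hmk _).symm.trans (h.trans (hmk _)))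
  obtain ⟨hij, hbc⟩ | ⟨hb, -⟩ := monomial_eq_monomial_iff.mp hmono
  · exact Prod.ext (by cases b <;> cases c <;> simp_all) (Fin.ext hij)
  · cases b <;> simp at hb

end Polynomial

/-- For `n ≥ 1`, the units of finite multiplicative order of
`R_n = ℤ[T]/(Tⁿ - 1)` are exactly the elements `± T̄^i`, `0 ≤ i < n`; these `2n`
elements are pairwise distinct, so the set of roots of unity of `R_n` has `2n` elements. -/
theorem stmt_5 (n : ℕ) (hn : 1 ≤ n) :
    ({x : Polynomial ℤ ⧸ Ideal.span {(Polynomial.X : Polynomial ℤ) ^ n - 1} |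
        ∃ m : ℕ, 0 < m ∧ x ^ m = 1} =
      Set.range (fun p : Bool × Fin n =>
        (if p.1 then (1 : Polynomial ℤ ⧸ Ideal.span {(Polynomial.X : Polynomial ℤ) ^ n - 1})
          else -1) *
          (Ideal.Quotient.mk (Ideal.span {(Polynomial.X : Polynomial ℤ) ^ n - 1})
            Polynomial.X) ^ (p.2 : ℕ))) ∧
    Function.Injective (fun p : Bool × Fin n =>
      (if p.1 then (1 : Polynomial ℤ ⧸ Ideal.span {(Polynomial.X : Polynomial ℤ) ^ n - 1})
        else -1) *
        (Ideal.Quotient.mk (Ideal.span {(Polynomial.X : Polynomial ℤ) ^ n - 1})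
          Polynomial.X) ^ (p.2 : ℕ)) ∧
    Set.ncard {x : Polynomial ℤ ⧸ Ideal.span {(Polynomial.X : Polynomial ℤ) ^ n - 1} |
        ∃ m : ℕ, 0 < m ∧ x ^ m = 1} = 2 * n := by
  set F := fun p : Bool × Fin n =>
    (if p.1 then (1 : ℤ[X] ⧸ Ideal.span {(X : ℤ[X]) ^ n - 1}) else -1) *
      Ideal.Quotient.mk (Ideal.span {(X : ℤ[X]) ^ n - 1}) X ^ (p.2 : ℕ)
  have hinj : Function.Injective F := injective_sign_mul_mk_X_pow n
  have hrange : {x | ∃ m, 0 < m ∧ x ^ m = 1} = Set.range F := by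
    ext x
    constructor
    · rintro ⟨m, hm, hx⟩
      obtain ⟨i, hi, rfl | rfl⟩ := eq_mk_X_pow_or_neg_of_pow_eq_one (by omega) hm.ne' hx
      exacts [⟨(true, ⟨i, hi⟩), one_mul _⟩, ⟨(false, ⟨i, hi⟩), by
        simp only [F, Bool.false_eq_true, ↓reduceIte]; ring⟩]
    · rintro ⟨p, rfl⟩
      exact ⟨2 * n, by omega, sign_mul_pow_pow_two_mul_eq_one mk_X_pow_eq_one p.1 p.2⟩
  refine ⟨hrange, hinj, ?_⟩
  rw [hrange, Set.ncard_range_of_injective hinj]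
  simp [mul_comm]
end

section
/- Let R be a commutative ring whose underlying additive group is a free ℤ-module of finite rank. Then the set of roots of unity of R is finite. -/
/-!
Reduction modulo `3` maps the roots of unity of `R` into the finite ring `R ⧸ 3R`, and it is
injective on them (Minkowski's argument): if `x ≡ y` then `z = x y⁻¹` is a root of unity with
`z ≡ 1 mod 3`, and some power of `z` of prime order `q` would still be `≡ 1 mod 3`. For such an
element, `z ≡ 1 mod 3ˢ` with `s ≥ 1` forces `z ≡ 1 mod 3ˢ⁺¹`, by the binomial expansion of
`(1 + 3ˢc)^q` and cancellation of powers of `3` in the torsion-free group `R`. Hence `z - 1` is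
divisible by every power of `3`, which in a free `ℤ`-module means `z = 1`.
-/

section

variable {R : Type*} [CommRing R]

theorem eq_zero_of_forall_natCast_pow_dvd [Module.Free ℤ R] {n : ℕ} (hn : 1 < n) {x : R}
    (h : ∀ s, (n : R) ^ s ∣ x) : x = 0 := by
  let b := Module.Free.chooseBasis ℤ R
  refine b.repr.map_eq_zero_iff.mp (Finsupp.ext fun i ↦ ?_)
  have hdvd (s : ℕ) : (n : ℤ) ^ s ∣ b.repr x i := by
    obtain ⟨c, rfl⟩ := h s
    refine ⟨b.repr c i, ?_⟩
    rw [show (n : R) ^ s * c = ((n : ℤ) ^ s) • c by simp [zsmul_eq_mul], map_zsmul,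
      Finsupp.smul_apply, smul_eq_mul]
  exact Int.eq_zero_of_dvd_of_natAbs_lt_natAbs (hdvd (b.repr x i).natAbs)
    (by simpa [Int.natAbs_pow] using Nat.lt_pow_self hn)

theorem eq_zero_of_natCast_mul_eq_zero [IsAddTorsionFree R] {n : ℕ} (hn : n ≠ 0) {a : R}
    (h : (n : R) * a = 0) : a = 0 :=
  (smul_eq_zero_iff_right hn).mp (by rwa [nsmul_eq_mul])

theorem natCast_pow_succ_dvd_sub_one_of_coprime [IsAddTorsionFree R] {n m s : ℕ}
    (hnm : n.Coprime m) (hs : s ≠ 0) {z : R} (hz : z ^ m = 1) (h : (n : R) ^ s ∣ z - 1) :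
    (n : R) ^ (s + 1) ∣ z - 1 := by
  obtain rfl | hn := eq_or_ne n 0
  · rw [Nat.coprime_zero_left] at hnm
    simp [← hz, hnm]
  obtain ⟨t, rfl⟩ := Nat.exists_eq_add_one_of_ne_zero hs
  obtain ⟨c, hc⟩ := h
  obtain ⟨d, hd⟩ := sq_dvd_add_pow_sub_sub ((n : R) ^ (t + 1) * c) 1 m
  rw [← hc, add_sub_cancel, hz, hc, one_pow, one_pow, one_mul] at hd
  have hmc : (m : R) * c + (n : R) ^ (t + 1) * (c ^ 2 * d) = 0 := by
    refine eq_zero_of_natCast_mul_eq_zero (pow_ne_zero (t + 1) hn) ?_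
    push_cast
    linear_combination -hd
  obtain ⟨e, rfl⟩ : (n : R) ∣ c :=
    hnm.cast.dvd_of_dvd_mul_left ⟨-((n : R) ^ t * (c ^ 2 * d)), by linear_combination hmc⟩
  exact ⟨e, by rw [hc]; ring⟩

theorem three_pow_succ_dvd_sub_one_of_pow_three_eq_one [IsAddTorsionFree R] {s : ℕ} (hs : s ≠ 0)
    {z : R} (hz : z ^ 3 = 1) (h : (3 : R) ^ s ∣ z - 1) : (3 : R) ^ (s + 1) ∣ z - 1 := by
  obtain ⟨t, rfl⟩ := Nat.exists_eq_add_one_of_ne_zero hs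
  obtain ⟨c, hc⟩ := h
  rw [sub_eq_iff_eq_add'.mp hc] at hz
  have hcube : c + 3 ^ (t + 1) * c ^ 2 + 3 ^ (2 * t + 1) * c ^ 3 = 0 := by
    refine eq_zero_of_natCast_mul_eq_zero (n := 3 ^ (t + 2)) (by positivity) ?_
    push_cast
    linear_combination hz
  obtain ⟨e, rfl⟩ : (3 : R) ∣ c :=
    ⟨-(3 ^ t * c ^ 2 + 3 ^ (2 * t) * c ^ 3), by linear_combination hcube⟩
  exact ⟨e, by rw [hc]; ring⟩

theorem eq_one_of_pow_prime_eq_one_of_three_dvd_sub_one [Module.Free ℤ R] {q : ℕ} (hq : q.Prime)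
    {z : R} (hz : z ^ q = 1) (h3 : (3 : R) ∣ z - 1) : z = 1 := by
  have : IsAddTorsionFree R := .of_isTorsionFree ℤ R
  have step (s : ℕ) (hs : s ≠ 0) : (3 : R) ^ s ∣ z - 1 → (3 : R) ^ (s + 1) ∣ z - 1 := by
    obtain rfl | hq3 := eq_or_ne q 3
    · exact three_pow_succ_dvd_sub_one_of_pow_three_eq_one hs hz
    · have hcop : Nat.Coprime 3 q := (Nat.coprime_primes Nat.prime_three hq).mpr hq3.symm
      exact_mod_cast natCast_pow_succ_dvd_sub_one_of_coprime hcop hs hz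
  have hdvd (s : ℕ) : (3 : R) ^ s ∣ z - 1 := by
    induction s with
    | zero => simp
    | succ s ih =>
      obtain rfl | hs := eq_or_ne s 0
      · simpa using h3
      · exact step s hs ih
  exact sub_eq_zero.mp <|
    eq_zero_of_forall_natCast_pow_dvd (n := 3) (by norm_num) (by simpa using hdvd)

theorem eq_one_of_isOfFinOrder_of_three_dvd_sub_one [Module.Free ℤ R] {z : R}
    (hz : IsOfFinOrder z) (h3 : (3 : R) ∣ z - 1) : z = 1 := by
  by_contra hne
  obtain ⟨q, hq, hqz⟩ := Nat.exists_prime_and_dvd (orderOf_eq_one_iff.not.mpr hne)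
  have hord : orderOf (z ^ (orderOf z / q)) = q := orderOf_pow_orderOf_div hz.orderOf_pos.ne' hqz
  have hw : z ^ (orderOf z / q) = 1 :=
    eq_one_of_pow_prime_eq_one_of_three_dvd_sub_one hq
      (by rw [← pow_orderOf_eq_one (z ^ (orderOf z / q)), hord])
      (h3.trans (sub_one_dvd_pow_sub_one z _))
  exact hq.one_lt.ne' (by rw [← hord, hw, orderOf_one])

theorem finite_quotient_span_natCast [Module.Finite ℤ R] {n : ℕ} (hn : n ≠ 0) :
    Finite (R ⧸ Ideal.span {(n : R)}) := by
  refine Module.finite_of_fg_torsion _ fun x ↦ ?_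
  obtain ⟨x, rfl⟩ := Ideal.Quotient.mk_surjective x
  refine ⟨⟨n, mem_nonZeroDivisors_of_ne_zero (by exact_mod_cast hn)⟩, ?_⟩
  rw [Submonoid.smul_def, ← map_zsmul, Ideal.Quotient.eq_zero_iff_mem, Ideal.mem_span_singleton]
  exact ⟨x, by simp [zsmul_eq_mul]⟩

theorem injOn_quotient_mk_span_three [Module.Free ℤ R] :
    Set.InjOn (Ideal.Quotient.mk (Ideal.span {(3 : R)})) {x | IsOfFinOrder x} := by
  intro x hx y hy hxy
  rw [Ideal.Quotient.eq, Ideal.mem_span_singleton] at hxy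
  have hyy : y * y ^ (orderOf y - 1) = 1 := by
    rw [mul_pow_sub_one hy.orderOf_pos.ne', pow_orderOf_eq_one]
  have hz : x * y ^ (orderOf y - 1) = 1 :=
    eq_one_of_isOfFinOrder_of_three_dvd_sub_one (hx.mul hy.pow)
      (by rw [← hyy, ← sub_mul]; exact dvd_mul_of_dvd_left hxy _)
  calc x = x * (y * y ^ (orderOf y - 1)) := by rw [hyy, mul_one]
    _ = y * (x * y ^ (orderOf y - 1)) := by ring
    _ = y := by rw [hz, mul_one]

end

/-- If the additive group of a commutative ring `R` is a free ℤ-module of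
finite rank, then the set of roots of unity of `R` (units of finite multiplicative
order) is finite. -/
theorem stmt_6 (R : Type*) [CommRing R] [Module.Free ℤ R] [Module.Finite ℤ R] :
    {x : R | ∃ m : ℕ, 0 < m ∧ x ^ m = 1}.Finite := by
  have : Finite (R ⧸ Ideal.span {(3 : R)}) := by
    exact_mod_cast finite_quotient_span_natCast (R := R) three_ne_zero
  simp_rw [← isOfFinOrder_iff_pow_eq_one]
  exact (Set.toFinite _).of_finite_image injOn_quotient_mk_span_three
end

section
/- Let f be a continuous complex-valued function on the unit circle, with Fourier coefficients c_k = (1/2π) ∫_0^{2π} f(e^{iθ}) e^{−ikθ} dθ for k ∈ ℤ. If every c_k is an integer (i.e. lies in the image of ℤ in ℂ), then only finitely many of the c_k are nonzero, and f(e^{iθ}) = Σ_k c_k e^{ikθ} for all θ, the sum being finite; in other words, f coincides on the circle with a Laurent polynomial with integer coefficients. -/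
open MeasureTheory AddCircle Complex

/-- If all Fourier coefficients of a continuous function on the unit
circle are integers, then only finitely many are nonzero and the function is the
corresponding (finite) Laurent polynomial with integer coefficients on the circle. -/
theorem stmt_13 (f : ℂ → ℂ) (hf : ContinuousOn f (Metric.sphere (0 : ℂ) 1))
    (c : ℤ → ℂ)
    (hc : ∀ k : ℤ, c k = (2 * (Real.pi : ℂ))⁻¹ *
      ∫ θ in (0 : ℝ)..(2 * Real.pi),
        f (Complex.exp (θ * Complex.I)) * Complex.exp (-(k : ℂ) * θ * Complex.I))
    (hint : ∀ k : ℤ, ∃ m : ℤ, c k = (m : ℂ)) :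
    {k : ℤ | c k ≠ 0}.Finite ∧
    ∀ θ : ℝ, f (Complex.exp (θ * Complex.I)) =
      ∑ᶠ k : ℤ, c k * Complex.exp ((k : ℂ) * θ * Complex.I) := by
  have hπ : (0:ℝ) < 2 * Real.pi := by positivity
  haveI : Fact ((0:ℝ) < 2 * Real.pi) := ⟨hπ⟩
  -- the function on the additive circle
  have hcont : Continuous fun x : AddCircle (2 * Real.pi) => f (toCircle x) :=
    hf.comp_continuous (continuous_induced_dom.comp continuous_toCircle)
      (fun x => (toCircle x).2)
  set g : C(AddCircle (2 * Real.pi), ℂ) := ⟨_, hcont⟩ with hg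
  have hgθ : ∀ θ : ℝ, g (θ : AddCircle (2 * Real.pi)) = f (Complex.exp (θ * Complex.I)) := by
    intro θ
    have : toCircle (θ : AddCircle (2 * Real.pi)) = Circle.exp θ := by
      rw [AddCircle.toCircle_apply_mk]
      congr 1
      field_simp
    simp only [hg, ContinuousMap.coe_mk, this, Circle.coe_exp]
  have hfour : ∀ (k : ℤ) (θ : ℝ),
      fourier k (θ : AddCircle (2 * Real.pi)) = Complex.exp ((k:ℂ) * θ * Complex.I) := by
    intro k θ
    rw [fourier_coe_apply]
    congr 1
    have h2π : (2 * (Real.pi : ℂ)) ≠ 0 := by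
      simpa using Real.pi_ne_zero
    push_cast
    rw [div_eq_iff h2π]
    ring
  -- the Fourier coefficients of g are the given c k
  have hcoeff : ∀ k : ℤ, fourierCoeff (⇑g) k = c k := by
    intro k
    rw [hc k, fourierCoeff_eq_intervalIntegral (⇑g) k 0, zero_add]
    rw [intervalIntegral.integral_congr
      (g := fun θ : ℝ => f (Complex.exp (θ * Complex.I)) * Complex.exp (-(k : ℂ) * θ * Complex.I))
      (fun θ _ => by
        rw [smul_eq_mul, hfour (-k) θ, hgθ θ, mul_comm]
        push_cast
        ring_nf)]
    rw [real_smul]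
    push_cast
    norm_num
  -- Parseval/ℓ² : the Fourier coefficients are square-summable
  have hsq : Summable fun k : ℤ => ‖c k‖ ^ 2 := by
    have hmem := lp.memℓp
      (fourierBasis.repr (ContinuousMap.toLp (E := ℂ) 2 haarAddCircle ℂ g))
    have hs := hmem.summable (p := 2) (by norm_num)
    simp only [ENNReal.toReal_ofNat] at hs
    have heq : ∀ k : ℤ,
        fourierBasis.repr (ContinuousMap.toLp (E := ℂ) 2 haarAddCircle ℂ g) k = c k := by
      intro k
      rw [fourierBasis_repr, fourierCoeff_toLp, hcoeff]
    refine hs.congr fun k => ?_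
    rw [heq k]
    norm_num
  -- hence finitely many nonzero (integers bounded below by 1 in norm)
  have hfin : {k : ℤ | c k ≠ 0}.Finite := by
    have htend := hsq.tendsto_cofinite_zero
    have hev : ∀ᶠ k in Filter.cofinite, ‖c k‖ ^ 2 < 1 :=
      htend.eventually_lt_const (by norm_num)
    refine (Filter.eventually_cofinite.mp hev).subset ?_
    intro k hk
    obtain ⟨m, hm⟩ := hint k
    have hm0 : m ≠ 0 := by
      rintro rfl
      exact hk (by simpa using hm)
    have h1 : (1:ℝ) ≤ ‖c k‖ := by
      rw [hm]
      rw [Complex.norm_intCast]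
      exact_mod_cast Int.one_le_abs hm0
    simp only [Set.mem_setOf_eq, not_lt]
    nlinarith
  refine ⟨hfin, ?_⟩
  -- summability of the coefficients
  have hsumm : Summable (fourierCoeff (⇑g)) := by
    apply summable_of_ne_finset_zero (s := hfin.toFinset)
    intro k hk
    rw [hcoeff]
    by_contra h
    exact hk (hfin.mem_toFinset.2 h)
  intro θ
  have hps := has_pointwise_sum_fourier_series_of_summable hsumm (θ : AddCircle (2 * Real.pi))
  have hsupp : (Function.support fun k : ℤ => c k * Complex.exp ((k:ℂ) * θ * Complex.I))
      ⊆ ↑hfin.toFinset := by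
    intro k hk
    simp only [Function.mem_support, ne_eq, mul_eq_zero, not_or] at hk
    exact hfin.mem_toFinset.2 hk.1
  rw [finsum_eq_finset_sum_of_support_subset _ hsupp, ← hgθ θ]
  refine (hps.unique (hasSum_sum_of_ne_finset_zero (s := hfin.toFinset) ?_)).trans ?_
  · intro k hk
    have : c k = 0 := by by_contra h; exact hk (hfin.mem_toFinset.2 h)
    rw [smul_eq_mul, hcoeff, this, zero_mul]
  · apply Finset.sum_congr rfl
    intro k _
    rw [smul_eq_mul, hcoeff, hfour]
end
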